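/- Let M be a model based on a frame satisfying a set of generalized path conditions {G(nᵢ,kᵢ)}. Let the Σ-system S(G) contain the rules ◆ ⟶ ■ⁿ◆ᵏ and ■ ⟶ ■ᵏ◆ⁿ for each condition G(n,k), and interpret ◆ as a forward R-step and ■ as a backward R-step. Then for all worlds w, u, if there is a string s derivable from ◆ in S(G) and a path from w to u realizing s in M (i.e. M ⊨ w →^s u), then wRu. -/
import Mathlib


/-- The two-character alphabet Σ = {◆, ■}. -/
inductive Ch : Type
  | fd  -- ◆, a forward R-step
  | bd  -- ■, a backward R-step
deriving DecidableEq

/-- A Σ-system is a set of production rules `a ⟶ r`. -/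
abbrev SigmaSystem : Type := Set (Ch × List Ch)

/-- One-step derivation. -/
def Step (S : SigmaSystem) (x y : List Ch) : Prop :=
  ∃ (s' t' : List Ch) (a : Ch) (r : List Ch),
    (a, r) ∈ S ∧ x = s' ++ [a] ++ t' ∧ y = s' ++ r ++ t'

/-- The derivation relation: reflexive-transitive closure of one-step derivation. -/
def Derives (S : SigmaSystem) : List Ch → List Ch → Prop :=
  Relation.ReflTransGen (Step S)

/-- Interpretation of characters as relations: ρ(◆) = R, ρ(■) = R⁻¹. -/
def chRel {W : Type*} (R : W → W → Prop) : Ch → W → W → Prop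
  | .fd => R
  | .bd => fun w u => R u w

/-- `pathSat R s w u` means there is a path from `w` to `u` realizing the
string `s` (each character taken as a forward or backward R-step). -/
def pathSat {W : Type*} (R : W → W → Prop) : List Ch → W → W → Prop
  | [] => fun w u => w = u
  | a :: s => fun w u => ∃ v, chRel R a w v ∧ pathSat R s v u

/-- The n-fold relational composition `Rⁿ`, with `R⁰` the identity relation. -/
def relPow {W : Type*} (R : W → W → Prop) : ℕ → W → W → Prop
  | 0 => fun w u => w = u
  | n + 1 => fun w u => ∃ v, relPow R n w v ∧ R v u

/-- The Σ-system S(G) determined by a set of generalized path conditions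
G = {G(n,k)}: the rules ◆ ⟶ ■ⁿ◆ᵏ and ■ ⟶ ■ᵏ◆ⁿ for each (n,k) ∈ G. -/
def SG (Gset : Set (ℕ × ℕ)) : SigmaSystem :=
  {p | ∃ n k : ℕ, (n, k) ∈ Gset ∧
    (p = (Ch.fd, List.replicate n Ch.bd ++ List.replicate k Ch.fd) ∨
     p = (Ch.bd, List.replicate k Ch.bd ++ List.replicate n Ch.fd))}

lemma pathSat_append {W : Type*} (R : W → W → Prop) (s t : List Ch) (w u : W) :
    pathSat R (s ++ t) w u ↔ ∃ v, pathSat R s w v ∧ pathSat R t v u := by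
  induction s generalizing w with
  | nil => simp [pathSat]
  | cons a s ih =>
    simp only [List.cons_append, pathSat]
    constructor
    · rintro ⟨x, hx, hp⟩
      obtain ⟨v, h1, h2⟩ := (ih x).mp hp
      exact ⟨v, ⟨x, hx, h1⟩, h2⟩
    · rintro ⟨v, ⟨x, hx, h1⟩, h2⟩
      exact ⟨x, hx, (ih x).mpr ⟨v, h1, h2⟩⟩

lemma relPow_succ' {W : Type*} (R : W → W → Prop) (n : ℕ) (w u : W) :
    relPow R (n + 1) w u ↔ ∃ v, R w v ∧ relPow R n v u := by
  induction n generalizing u with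
  | zero =>
    constructor
    · rintro ⟨v, rfl, h⟩; exact ⟨u, h, rfl⟩
    · rintro ⟨v, h, rfl⟩; exact ⟨w, rfl, h⟩
  | succ n ih =>
    constructor
    · rintro ⟨v, hv, h⟩
      obtain ⟨x, hx, h'⟩ := (ih v).mp hv
      exact ⟨x, hx, v, h', h⟩
    · rintro ⟨v, hv, x, hx, h⟩
      exact ⟨x, (ih x).mpr ⟨v, hv, hx⟩, h⟩

lemma pathSat_rep_fd {W : Type*} (R : W → W → Prop) (n : ℕ) (w u : W) :
    pathSat R (List.replicate n Ch.fd) w u ↔ relPow R n w u := by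
  induction n generalizing w with
  | zero => simp [pathSat, relPow]
  | succ n ih =>
    rw [relPow_succ']
    simp only [List.replicate_succ, pathSat, chRel]
    exact exists_congr fun v => and_congr_right fun _ => ih v

lemma pathSat_rep_bd {W : Type*} (R : W → W → Prop) (n : ℕ) (w u : W) :
    pathSat R (List.replicate n Ch.bd) w u ↔ relPow R n u w := by
  induction n generalizing w with
  | zero =>
    simp only [List.replicate, pathSat, relPow]
    exact eq_comm
  | succ n ih =>
    simp only [List.replicate_succ, pathSat, chRel, relPow]
    constructor
    · rintro ⟨v, hv, h⟩; exact ⟨v, (ih v).mp h, hv⟩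
    · rintro ⟨v, h, hv⟩; exact ⟨v, hv, (ih v).mpr h⟩

lemma rule_sound {W : Type*} (R : W → W → Prop) (Gset : Set (ℕ × ℕ))
    (hG : ∀ n k, (n, k) ∈ Gset →
      ∀ w u v : W, relPow R n w u → relPow R k w v → R u v)
    (a : Ch) (r : List Ch) (hr : (a, r) ∈ SG Gset) (v v' : W)
    (hp : pathSat R r v v') : chRel R a v v' := by
  obtain ⟨n, k, hnk, h | h⟩ := hr
  · obtain ⟨rfl, rfl⟩ := Prod.mk.injEq .. ▸ (Prod.ext_iff.mp h)
    obtain ⟨m, h1, h2⟩ := (pathSat_append R _ _ v v').mp hp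
    exact hG n k hnk m v v' ((pathSat_rep_bd R n v m).mp h1)
      ((pathSat_rep_fd R k m v').mp h2)
  · obtain ⟨rfl, rfl⟩ := Prod.mk.injEq .. ▸ (Prod.ext_iff.mp h)
    obtain ⟨m, h1, h2⟩ := (pathSat_append R _ _ v v').mp hp
    exact hG n k hnk m v' v ((pathSat_rep_fd R n m v').mp h2)
      ((pathSat_rep_bd R k v m).mp h1)

lemma step_sound {W : Type*} (R : W → W → Prop) (Gset : Set (ℕ × ℕ))
    (hG : ∀ n k, (n, k) ∈ Gset →
      ∀ w u v : W, relPow R n w u → relPow R k w v → R u v)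
    (x y : List Ch) (hxy : Step (SG Gset) x y) (w u : W)
    (hp : pathSat R y w u) : pathSat R x w u := by
  obtain ⟨s', t', a, r, hr, rfl, rfl⟩ := hxy
  obtain ⟨v1, h1, h3⟩ := (pathSat_append R _ _ _ _).mp hp
  obtain ⟨v2, h2, h2'⟩ := (pathSat_append R _ _ _ _).mp h1
  refine (pathSat_append R _ _ _ _).mpr ⟨v1, ?_, h3⟩
  refine (pathSat_append R _ _ _ _).mpr ⟨v2, h2, ?_⟩
  exact ⟨v1, rule_sound R Gset hG a r hr v2 v1 h2', rfl⟩

/-- If a frame satisfies all the generalized path conditions in `Gset`, then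
whenever some string derivable from ◆ in S(G) is realized by a path from `w`
to `u`, we have `w R u`. -/
theorem path_in_language_implies_R {W : Type*} (R : W → W → Prop)
    (Gset : Set (ℕ × ℕ))
    (hG : ∀ n k, (n, k) ∈ Gset →
      ∀ w u v : W, relPow R n w u → relPow R k w v → R u v)
    (w u : W) (s : List Ch)
    (hs : Derives (SG Gset) [Ch.fd] s) (hpath : pathSat R s w u) :
    R w u := by
  have key : ∀ x : List Ch, Derives (SG Gset) x s → pathSat R x w u := by
    intro x hx
    induction hx using Relation.ReflTransGen.head_induction_on with
    | refl => exact hpath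
    | head hstep _ ih => exact step_sound R Gset hG _ _ hstep w u ih
  obtain ⟨v, hv, rfl⟩ := key [Ch.fd] hs
  exact hv
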